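/- Let p>2, let u be a nonnegative classical solution of u_t−Δu=|∇u|^p in Q_T with u=0 on Γ_T, having an isolated gradient blowup point at (0,0,T). Then there exists a constant C>0 (possibly depending on u) such that u_xx ≥ −C on Q̃:=(ω̄'×[T/2,T])∖{(0,0,T)}. -/

import Mathlib

open Real Set Filter MeasureTheory

noncomputable section

/-- Partial derivative of `u(x,y,t)` with respect to `x`. -/
def pdx (u : ℝ → ℝ → ℝ → ℝ) (x y t : ℝ) : ℝ := deriv (fun s => u s y t) x

/-- Partial derivative with respect to `y`. -/
def pdy (u : ℝ → ℝ → ℝ → ℝ) (x y t : ℝ) : ℝ := deriv (fun s => u x s t) y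

/-- Partial derivative with respect to `t`. -/
def pdt (u : ℝ → ℝ → ℝ → ℝ) (x y t : ℝ) : ℝ := deriv (fun s => u x y s) t

/-- Second partial derivative with respect to `x`. -/
def pdxx (u : ℝ → ℝ → ℝ → ℝ) (x y t : ℝ) : ℝ := deriv (fun s => pdx u s y t) x

/-- Second partial derivative with respect to `y`. -/
def pdyy (u : ℝ → ℝ → ℝ → ℝ) (x y t : ℝ) : ℝ := deriv (fun s => pdy u x s t) y

/-- Mixed second partial derivative `u_{xy}` (first `x`, then `y`). -/
def pdxy (u : ℝ → ℝ → ℝ → ℝ) (x y t : ℝ) : ℝ := deriv (fun s => pdx u x s t) y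

/-- The norm of the spatial gradient, `|∇u| = (u_x² + u_y²)^{1/2}`. -/
def gradNorm (u : ℝ → ℝ → ℝ → ℝ) (x y t : ℝ) : ℝ :=
  Real.sqrt ((pdx u x y t) ^ 2 + (pdy u x y t) ^ 2)

/-- `C^{2,1}`-type regularity of `u` at the point `(x,y,t)`: twice (continuously)
differentiable in the space variables and once in time. -/
def C21At (u : ℝ → ℝ → ℝ → ℝ) (x y t : ℝ) : Prop :=
  DifferentiableAt ℝ (fun s => u s y t) x ∧
  DifferentiableAt ℝ (fun s => u x s t) y ∧
  DifferentiableAt ℝ (fun s => u x y s) t ∧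
  DifferentiableAt ℝ (fun s => pdx u s y t) x ∧
  DifferentiableAt ℝ (fun s => pdy u x s t) y ∧
  DifferentiableAt ℝ (fun s => pdx u x s t) y ∧
  ContinuousAt (fun q : ℝ × ℝ × ℝ => u q.1 q.2.1 q.2.2) (x, y, t) ∧
  ContinuousAt (fun q : ℝ × ℝ × ℝ => pdx u q.1 q.2.1 q.2.2) (x, y, t) ∧
  ContinuousAt (fun q : ℝ × ℝ × ℝ => pdy u q.1 q.2.1 q.2.2) (x, y, t) ∧
  ContinuousAt (fun q : ℝ × ℝ × ℝ => pdt u q.1 q.2.1 q.2.2) (x, y, t) ∧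
  ContinuousAt (fun q : ℝ × ℝ × ℝ => pdxx u q.1 q.2.1 q.2.2) (x, y, t) ∧
  ContinuousAt (fun q : ℝ × ℝ × ℝ => pdyy u q.1 q.2.1 q.2.2) (x, y, t) ∧
  ContinuousAt (fun q : ℝ × ℝ × ℝ => pdxy u q.1 q.2.1 q.2.2) (x, y, t)

/-- `u` is a nonnegative classical solution of `u_t - Δu = |∇u|^p` in
`Q_T = ω × (0,T)`, `ω = (-L,L) × (0,L)`, with `u = 0` on `Γ_T = (-L,L) × {0} × (0,T)`. -/
structure ClassicalSolution (p L T : ℝ) (u : ℝ → ℝ → ℝ → ℝ) : Prop where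
  nonneg : ∀ ⦃x y t : ℝ⦄, |x| ≤ L → y ∈ Icc (0:ℝ) L → t ∈ Ioo 0 T → 0 ≤ u x y t
  smooth : ∀ ⦃x y t : ℝ⦄, |x| ≤ L → y ∈ Icc (0:ℝ) L → t ∈ Ioo 0 T → C21At u x y t
  pde : ∀ ⦃x y t : ℝ⦄, |x| < L → y ∈ Ioo (0:ℝ) L → t ∈ Ioo 0 T →
    pdt u x y t - (pdxx u x y t + pdyy u x y t) = gradNorm u x y t ^ p
  bc : ∀ ⦃x t : ℝ⦄, |x| < L → t ∈ Ioo 0 T → u x 0 t = 0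

/-- `u` has an isolated gradient blow-up point at `(0,0,T)`:
`limsup |∇u| = ∞` at `(0,0,T)` while `∇u` stays bounded on `K × (0,T)` for every
compact `K ⊆ ω̄ \ {(0,0)}`. -/
structure IsolatedGBU (L T : ℝ) (u : ℝ → ℝ → ℝ → ℝ) : Prop where
  blowup : ∀ M : ℝ, ∀ δ > (0:ℝ), ∃ x y t : ℝ, |x| ≤ L ∧ y ∈ Icc (0:ℝ) L ∧
    t ∈ Ioo 0 T ∧ |x| < δ ∧ |y| < δ ∧ T - δ < t ∧ M < gradNorm u x y t
  bounded : ∀ K : Set (ℝ × ℝ), IsCompact K →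
    K ⊆ (Icc (-L) L ×ˢ Icc (0:ℝ) L) \ {((0:ℝ), (0:ℝ))} →
    ∃ M : ℝ, ∀ q ∈ K, ∀ t ∈ Ioo (0:ℝ) T, gradNorm u q.1 q.2 t ≤ M

/-- `u` extends as a `C^{2,1}` function to `(ω̄' × [T/2,T]) \ {(0,0,T)}`,
`ω' = (-L/2,L/2) × (0,L/2)`; values and derivatives at `t = T` refer to this extension. -/
def ExtC21 (L T : ℝ) (u : ℝ → ℝ → ℝ → ℝ) : Prop :=
  ∀ ⦃x y t : ℝ⦄, |x| ≤ L / 2 → y ∈ Icc (0:ℝ) (L / 2) → t ∈ Icc (T / 2) T →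
    ¬(x = 0 ∧ y = 0 ∧ t = T) → C21At u x y t

/-- The monotonicity condition `x·u_x ≤ 0` in `Q_T`. -/
def MonCond (L T : ℝ) (u : ℝ → ℝ → ℝ → ℝ) : Prop :=
  ∀ ⦃x y t : ℝ⦄, |x| < L → y ∈ Ioo (0:ℝ) L → t ∈ Ioo 0 T → x * pdx u x y t ≤ 0

/-!
Away from the blow-up point, `u_xx` is continuous on a compact part `K` of `Q̃`, hence `u_xx ≥ -M`
there. Near the blow-up point fix `h ∈ (0, L/8]` and let `w = u(x+h,·) + u(x-h,·) - 2u`. At a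
minimum of `w` one has `∇w = 0`, i.e. `∇u(x)` is the midpoint of `∇u(x ± h)`, so convexity of
`ξ ↦ |ξ|^p` gives `w_t - Δw ≥ 0` there; hence `w` obeys the minimum principle on the cylinder
`[-L/4, L/4] × [0, L/4] × [T/2, τ]`, `τ < T`. On its parabolic boundary `w = 0` on `y = 0` and
`w ≥ -M h²` elsewhere by Taylor's formula along segments lying in `K`. So `w ≥ -M h²` in the
cylinder, and `h → 0` gives `u_xx ≥ -M` for `t < T`, and at `t = T` by continuity.
-/

open Topology

theorem sqrt_add_sq_add_sq_le (a₁ a₂ b₁ b₂ : ℝ) :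
    √((a₁ + b₁) ^ 2 + (a₂ + b₂) ^ 2) ≤ √(a₁ ^ 2 + a₂ ^ 2) + √(b₁ ^ 2 + b₂ ^ 2) := by
  have hcs : a₁ * b₁ + a₂ * b₂ ≤ √(a₁ ^ 2 + a₂ ^ 2) * √(b₁ ^ 2 + b₂ ^ 2) := by
    rw [← Real.sqrt_mul (by positivity)]
    refine (le_abs_self _).trans (Real.abs_le_sqrt ?_)
    nlinarith [sq_nonneg (a₁ * b₂ - a₂ * b₁)]
  rw [Real.sqrt_le_left (by positivity)]
  nlinarith [Real.sq_sqrt (by positivity : 0 ≤ a₁ ^ 2 + a₂ ^ 2),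
    Real.sq_sqrt (by positivity : 0 ≤ b₁ ^ 2 + b₂ ^ 2)]

theorem two_mul_sqrt_sq_add_sq_rpow_le {p : ℝ} (hp : 1 ≤ p) {a₁ a₂ b₁ b₂ c₁ c₂ : ℝ}
    (h₁ : a₁ + b₁ = 2 * c₁) (h₂ : a₂ + b₂ = 2 * c₂) :
    2 * √(c₁ ^ 2 + c₂ ^ 2) ^ p ≤ √(a₁ ^ 2 + a₂ ^ 2) ^ p + √(b₁ ^ 2 + b₂ ^ 2) ^ p := by
  set A := √(a₁ ^ 2 + a₂ ^ 2)
  set B := √(b₁ ^ 2 + b₂ ^ 2)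
  have hc : √(c₁ ^ 2 + c₂ ^ 2) ≤ (1 / 2) * A + (1 / 2) * B := by
    have h := sqrt_add_sq_add_sq_le a₁ a₂ b₁ b₂
    rw [h₁, h₂, show (2 * c₁) ^ 2 + (2 * c₂) ^ 2 = 2 ^ 2 * (c₁ ^ 2 + c₂ ^ 2) by ring,
      Real.sqrt_mul (by positivity), Real.sqrt_sq zero_le_two] at h
    linarith
  have hconv := (convexOn_rpow hp).2 (Real.sqrt_nonneg (a₁ ^ 2 + a₂ ^ 2))
    (Real.sqrt_nonneg (b₁ ^ 2 + b₂ ^ 2)) (by norm_num : (0 : ℝ) ≤ 1 / 2)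
    (by norm_num : (0 : ℝ) ≤ 1 / 2) (by norm_num : (1 / 2 : ℝ) + 1 / 2 = 1)
  simp only [smul_eq_mul] at hconv
  linarith [Real.rpow_le_rpow (Real.sqrt_nonneg _) hc (by linarith : (0 : ℝ) ≤ p)]

theorem IsLocalMin.deriv_deriv_nonneg {f : ℝ → ℝ} {a : ℝ} (hf : IsLocalMin f a)
    (hc : ContinuousAt f a) : 0 ≤ deriv (deriv f) a := by
  by_contra! hneg
  have hconst : ∀ᶠ x in 𝓝 a, f x = f a :=
    (hf.and (isLocalMax_of_deriv_deriv_neg hneg hf.deriv_eq_zero hc)).mono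
      fun x hx => le_antisymm hx.2 hx.1
  have hderiv : deriv f =ᶠ[𝓝 a] fun _ => 0 :=
    hconst.eventually_nhds.mono fun x hx => by
      rw [EventuallyEq.deriv_eq (f := fun _ => f a) hx, deriv_const]
  rw [hderiv.deriv_eq, deriv_const] at hneg
  exact lt_irrefl 0 hneg

theorem IsLocalMin.nonneg_of_hasDerivAt_of_hasDerivAt {f f' : ℝ → ℝ} {a c : ℝ}
    (hf : IsLocalMin f a) (hf' : ∀ᶠ x in 𝓝 a, HasDerivAt f (f' x) x) (hf'' : HasDerivAt f' c a) :
    0 ≤ c := by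
  have hderiv : deriv f =ᶠ[𝓝 a] f' := hf'.mono fun x hx => hx.deriv
  have := hf.deriv_deriv_nonneg hf'.self_of_nhds.continuousAt
  rwa [hderiv.deriv_eq, hf''.deriv] at this

theorem IsLocalMinOn.hasDerivAt_nonpos_of_Iic {f : ℝ → ℝ} {a f' : ℝ}
    (hf : IsLocalMinOn f (Iic a) a) (hd : HasDerivAt f f' a) : f' ≤ 0 := by
  have hseg : segment ℝ a (a + -1) ⊆ Iic a :=
    (convex_Iic a).segment_subset self_mem_Iic (by simp)
  have := hf.hasFDerivWithinAt_nonneg hd.hasDerivWithinAt.hasFDerivWithinAt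
    (mem_posTangentConeAt_of_segment_subset hseg)
  simpa using this

theorem hasDerivAt_add_sub_two_mul {f f' : ℝ → ℝ} {h x : ℝ}
    (h₁ : HasDerivAt f (f' (x + h)) (x + h)) (h₂ : HasDerivAt f (f' (x - h)) (x - h))
    (h₀ : HasDerivAt f (f' x) x) :
    HasDerivAt (fun s => f (s + h) + f (s - h) - 2 * f s)
      (f' (x + h) + f' (x - h) - 2 * f' x) x :=
  ((h₁.comp_add_const x h).fun_add (h₂.comp_sub_const x h)).fun_sub (h₀.const_mul 2)

theorem mul_sq_le_add_sub_two_mul_of_le_deriv_deriv {f : ℝ → ℝ} {x h A : ℝ} (hh : 0 ≤ h)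
    (hf : ∀ s ∈ Icc (x - h) (x + h), DifferentiableAt ℝ f s)
    (hf' : ∀ s ∈ Icc (x - h) (x + h), DifferentiableAt ℝ (deriv f) s)
    (hA : ∀ s ∈ Icc (x - h) (x + h), A ≤ deriv (deriv f) s) :
    A * h ^ 2 ≤ f (x + h) + f (x - h) - 2 * f x := by
  have hslope : ∀ r ∈ Icc 0 h, A * (2 * r) ≤ deriv f (x + r) - deriv f (x - r) := by
    rintro r ⟨hr₀, hrh⟩
    have := (convex_Icc (x - h) (x + h)).mul_sub_le_image_sub_of_le_deriv
      (fun s hs => (hf' s hs).continuousAt.continuousWithinAt)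
      (fun s hs => (hf' s (interior_subset hs)).differentiableWithinAt)
      (fun s hs => hA s (interior_subset hs))
      (x - r) ⟨by linarith, by linarith⟩ (x + r) ⟨by linarith, by linarith⟩ (by linarith)
    convert this using 2; ring
  have hψ : ∀ r ∈ Icc 0 h, HasDerivAt (fun r => f (x + r) + f (x - r) - A * r ^ 2)
      (deriv f (x + r) - deriv f (x - r) - A * (2 * r)) r := by
    rintro r ⟨hr₀, hrh⟩
    have h₁ := ((hf (x + r) ⟨by linarith, by linarith⟩).hasDerivAt).comp_const_add x r
    have h₂ := ((hf (x - r) ⟨by linarith, by linarith⟩).hasDerivAt).comp_const_sub x r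
    exact ((h₁.fun_add h₂).fun_sub ((hasDerivAt_pow 2 r).const_mul A)).congr_deriv
      (by push_cast; ring)
  have hmono := monotoneOn_of_hasDerivWithinAt_nonneg (convex_Icc 0 h)
    (fun r hr => (hψ r hr).continuousAt.continuousWithinAt)
    (fun r hr => (hψ r (interior_subset hr)).hasDerivWithinAt)
    (fun r hr => sub_nonneg.2 (hslope r (interior_subset hr)))
    (left_mem_Icc.2 hh) (right_mem_Icc.2 hh) hh
  simp only [add_zero, sub_zero] at hmono
  linarith

theorem add_sub_two_mul_le_mul_sq_of_deriv_deriv_le {f : ℝ → ℝ} {x h A : ℝ} (hh : 0 ≤ h)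
    (hf : ∀ s ∈ Icc (x - h) (x + h), DifferentiableAt ℝ f s)
    (hf' : ∀ s ∈ Icc (x - h) (x + h), DifferentiableAt ℝ (deriv f) s)
    (hA : ∀ s ∈ Icc (x - h) (x + h), deriv (deriv f) s ≤ A) :
    f (x + h) + f (x - h) - 2 * f x ≤ A * h ^ 2 := by
  have := mul_sq_le_add_sub_two_mul_of_le_deriv_deriv (f := -f) (A := -A) hh
    (fun s hs => (hf s hs).neg) (fun s hs => by simpa [deriv.neg'] using (hf' s hs).neg)
    (fun s hs => by simpa [deriv.neg'] using hA s hs)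
  simp only [Pi.neg_apply] at this
  linarith

theorem le_deriv_deriv_of_eventually_mul_sq_le {f : ℝ → ℝ} {x A : ℝ}
    (hf : ∀ᶠ s in 𝓝 x, DifferentiableAt ℝ f s ∧ DifferentiableAt ℝ (deriv f) s)
    (hc : ContinuousAt (deriv (deriv f)) x)
    (hA : ∀ᶠ h in 𝓝[>] 0, A * h ^ 2 ≤ f (x + h) + f (x - h) - 2 * f x) :
    A ≤ deriv (deriv f) x := by
  by_contra! hlt
  obtain ⟨B, hB, hBA⟩ := exists_between hlt
  obtain ⟨δ, hδ, hball⟩ :=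
    Metric.eventually_nhds_iff.1 (hf.and (hc.eventually (eventually_lt_nhds hB)))
  obtain ⟨h, hAh, hh₀, hhδ⟩ := (hA.and (Ioo_mem_nhdsGT hδ)).exists
  have hnear : ∀ s ∈ Icc (x - h) (x + h), dist s x < δ := fun s hs => by
    rw [Real.dist_eq, abs_lt]; constructor <;> linarith [hs.1, hs.2]
  have hchord := add_sub_two_mul_le_mul_sq_of_deriv_deriv_le hh₀.le
    (fun s hs => (hball (hnear s hs)).1.1) (fun s hs => (hball (hnear s hs)).1.2)
    (fun s hs => (hball (hnear s hs)).2.le)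
  nlinarith [pow_pos hh₀ 2]

theorem IsCompact.weak_minimum_principle {X : Type*} [TopologicalSpace X] {D P : Set X}
    {w φ : X → ℝ} {m : ℝ} (hD : IsCompact D) (hw : ContinuousOn w D) (hφ : ContinuousOn φ D)
    (hP : ∀ q ∈ D ∩ P, m ≤ w q)
    (hmin : ∀ ε > 0, ∀ q ∈ D, IsMinOn (fun q => w q + ε * φ q) D q → q ∈ P)
    {q : X} (hq : q ∈ D) : m ≤ w q := by
  obtain ⟨B, hB⟩ := hD.exists_bound_of_continuousOn hφ
  have hB₀ : 0 ≤ B := (norm_nonneg _).trans (hB q hq)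
  refine le_of_forall_pos_le_add fun ε hε => ?_
  set δ := ε / (2 * B + 1)
  have hδ : 0 < δ := by positivity
  obtain ⟨q₀, hq₀, hmin₀⟩ := hD.exists_isMinOn ⟨q, hq⟩ (hw.add (continuousOn_const.mul hφ))
  have hq₀P := hP q₀ ⟨hq₀, hmin δ hδ q₀ hq₀ hmin₀⟩
  have hle : w q₀ + δ * φ q₀ ≤ w q + δ * φ q := isMinOn_iff.1 hmin₀ q hq
  have hosc : φ q - φ q₀ ≤ 2 * B + 1 := by
    linarith [le_abs_self (φ q), neg_abs_le (φ q₀), (Real.norm_eq_abs _) ▸ hB q hq,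
      (Real.norm_eq_abs _) ▸ hB q₀ hq₀]
  have hδε : δ * (2 * B + 1) = ε := div_mul_cancel₀ ε (by positivity)
  nlinarith [mul_le_mul_of_nonneg_left hosc hδ.le]

section Solution

variable {p L T M : ℝ} {u : ℝ → ℝ → ℝ → ℝ}

theorem C21At.differentiableAt_x {x y t : ℝ} (h : C21At u x y t) :
    DifferentiableAt ℝ (fun s => u s y t) x := h.1

theorem C21At.differentiableAt_y {x y t : ℝ} (h : C21At u x y t) :
    DifferentiableAt ℝ (fun s => u x s t) y := h.2.1

theorem C21At.differentiableAt_t {x y t : ℝ} (h : C21At u x y t) :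
    DifferentiableAt ℝ (fun s => u x y s) t := h.2.2.1

theorem C21At.differentiableAt_pdx_x {x y t : ℝ} (h : C21At u x y t) :
    DifferentiableAt ℝ (fun s => pdx u s y t) x := h.2.2.2.1

theorem C21At.differentiableAt_pdy_y {x y t : ℝ} (h : C21At u x y t) :
    DifferentiableAt ℝ (fun s => pdy u x s t) y := h.2.2.2.2.1

theorem C21At.continuousAt {x y t : ℝ} (h : C21At u x y t) :
    ContinuousAt (fun q : ℝ × ℝ × ℝ => u q.1 q.2.1 q.2.2) (x, y, t) := h.2.2.2.2.2.2.1

theorem C21At.continuousAt_pdxx {x y t : ℝ} (h : C21At u x y t) :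
    ContinuousAt (fun q : ℝ × ℝ × ℝ => pdxx u q.1 q.2.1 q.2.2) (x, y, t) :=
  h.2.2.2.2.2.2.2.2.2.2.1

def secondDiffX (u : ℝ → ℝ → ℝ → ℝ) (h x y t : ℝ) : ℝ :=
  u (x + h) y t + u (x - h) y t - 2 * u x y t

theorem ClassicalSolution.c21At_of_abs_add_lt (hsol : ClassicalSolution p L T u) {h x y t : ℝ}
    (hx : |x| + |h| < L) (hy : y ∈ Ioo 0 L) (ht : t ∈ Ioo 0 T) :
    C21At u (x + h) y t ∧ C21At u (x - h) y t ∧ C21At u x y t :=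
  ⟨hsol.smooth (by linarith [abs_add_le x h]) (Ioo_subset_Icc_self hy) ht,
    hsol.smooth (by linarith [abs_sub x h]) (Ioo_subset_Icc_self hy) ht,
    hsol.smooth (by linarith [abs_nonneg h]) (Ioo_subset_Icc_self hy) ht⟩

theorem ClassicalSolution.pdx_eq_zero_and_pdxx_nonneg_of_isLocalMin
    (hsol : ClassicalSolution p L T u) {h x y t : ℝ} (hx : |x| + |h| < L) (hy : y ∈ Ioo 0 L)
    (ht : t ∈ Ioo 0 T) (hmin : IsLocalMin (fun x' => secondDiffX u h x' y t) x) :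
    pdx u (x + h) y t + pdx u (x - h) y t - 2 * pdx u x y t = 0 ∧
      0 ≤ pdxx u (x + h) y t + pdxx u (x - h) y t - 2 * pdxx u x y t := by
  have hderiv : ∀ {s}, |s| + |h| < L → HasDerivAt (fun x' => secondDiffX u h x' y t)
      (pdx u (s + h) y t + pdx u (s - h) y t - 2 * pdx u s y t) s := fun {s} hs => by
    obtain ⟨c₁, c₂, c₀⟩ := hsol.c21At_of_abs_add_lt hs hy ht
    exact hasDerivAt_add_sub_two_mul (f' := fun s => pdx u s y t)
      c₁.differentiableAt_x.hasDerivAt c₂.differentiableAt_x.hasDerivAt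
      c₀.differentiableAt_x.hasDerivAt
  obtain ⟨c₁, c₂, c₀⟩ := hsol.c21At_of_abs_add_lt hx hy ht
  refine ⟨hmin.hasDerivAt_eq_zero (hderiv hx), hmin.nonneg_of_hasDerivAt_of_hasDerivAt
    (((continuous_abs.add continuous_const).continuousAt.eventually_lt continuousAt_const
      hx).mono fun s hs => hderiv hs) ?_⟩
  exact hasDerivAt_add_sub_two_mul (f' := fun s => pdxx u s y t)
    c₁.differentiableAt_pdx_x.hasDerivAt c₂.differentiableAt_pdx_x.hasDerivAt
    c₀.differentiableAt_pdx_x.hasDerivAt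

theorem ClassicalSolution.pdy_eq_zero_and_pdyy_nonneg_of_isLocalMin
    (hsol : ClassicalSolution p L T u) {h x y t : ℝ} (hx : |x| + |h| < L) (hy : y ∈ Ioo 0 L)
    (ht : t ∈ Ioo 0 T) (hmin : IsLocalMin (fun y' => secondDiffX u h x y' t) y) :
    pdy u (x + h) y t + pdy u (x - h) y t - 2 * pdy u x y t = 0 ∧
      0 ≤ pdyy u (x + h) y t + pdyy u (x - h) y t - 2 * pdyy u x y t := by
  have hderiv : ∀ {r}, r ∈ Ioo 0 L → HasDerivAt (fun y' => secondDiffX u h x y' t)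
      (pdy u (x + h) r t + pdy u (x - h) r t - 2 * pdy u x r t) r := fun {r} hr => by
    obtain ⟨c₁, c₂, c₀⟩ := hsol.c21At_of_abs_add_lt hx hr ht
    exact (c₁.differentiableAt_y.hasDerivAt.fun_add c₂.differentiableAt_y.hasDerivAt).fun_sub
      (c₀.differentiableAt_y.hasDerivAt.const_mul 2)
  obtain ⟨c₁, c₂, c₀⟩ := hsol.c21At_of_abs_add_lt hx hy ht
  refine ⟨hmin.hasDerivAt_eq_zero (hderiv hy), hmin.nonneg_of_hasDerivAt_of_hasDerivAt
    (Filter.mem_of_superset (Ioo_mem_nhds hy.1 hy.2) fun r hr => hderiv hr) ?_⟩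
  exact (c₁.differentiableAt_pdy_y.hasDerivAt.fun_add c₂.differentiableAt_pdy_y.hasDerivAt).fun_sub
    (c₀.differentiableAt_pdy_y.hasDerivAt.const_mul 2)

theorem ClassicalSolution.false_of_isLocalMin_secondDiffX (hsol : ClassicalSolution p L T u)
    (hp : 1 ≤ p) {h x y t ε : ℝ} (hε : 0 < ε) (hx : |x| + |h| < L) (hy : y ∈ Ioo 0 L)
    (ht : t ∈ Ioo 0 T)
    (hminx : IsLocalMin (fun x' => secondDiffX u h x' y t) x)
    (hminy : IsLocalMin (fun y' => secondDiffX u h x y' t) y)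
    (hmint : IsLocalMinOn (fun t' => secondDiffX u h x y t' + ε * t') (Iic t) t) : False := by
  obtain ⟨hwx, hwxx⟩ := hsol.pdx_eq_zero_and_pdxx_nonneg_of_isLocalMin hx hy ht hminx
  obtain ⟨hwy, hwyy⟩ := hsol.pdy_eq_zero_and_pdyy_nonneg_of_isLocalMin hx hy ht hminy
  obtain ⟨c₁, c₂, c₀⟩ := hsol.c21At_of_abs_add_lt hx hy ht
  have hwt : pdt u (x + h) y t + pdt u (x - h) y t - 2 * pdt u x y t + ε * 1 ≤ 0 :=
    hmint.hasDerivAt_nonpos_of_Iic (((c₁.differentiableAt_t.hasDerivAt.fun_add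
      c₂.differentiableAt_t.hasDerivAt).fun_sub
      (c₀.differentiableAt_t.hasDerivAt.const_mul 2)).fun_add ((hasDerivAt_id' t).const_mul ε))
  have hgrad := two_mul_sqrt_sq_add_sq_rpow_le hp
    (by linarith : pdx u (x + h) y t + pdx u (x - h) y t = 2 * pdx u x y t)
    (by linarith : pdy u (x + h) y t + pdy u (x - h) y t = 2 * pdy u x y t)
  have e₁ := hsol.pde (by linarith [abs_add_le x h]) hy ht (x := x + h)
  have e₂ := hsol.pde (by linarith [abs_sub x h]) hy ht (x := x - h)
  have e₀ := hsol.pde (by linarith [abs_nonneg h]) hy ht (x := x)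
  simp only [gradNorm] at e₁ e₂ e₀
  linarith

def innerCylinder (L T τ : ℝ) : Set (ℝ × ℝ × ℝ) :=
  Icc (-(L / 4)) (L / 4) ×ˢ Icc 0 (L / 4) ×ˢ Icc (T / 2) τ

def parabolicBoundary (L T τ : ℝ) : Set (ℝ × ℝ × ℝ) :=
  innerCylinder L T τ \ Ioo (-(L / 4)) (L / 4) ×ˢ Ioo 0 (L / 4) ×ˢ Ioc (T / 2) τ

theorem isCompact_innerCylinder (L T τ : ℝ) : IsCompact (innerCylinder L T τ) :=
  isCompact_Icc.prod (isCompact_Icc.prod isCompact_Icc)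

/-- A compact part `K` of `Q̃` avoiding `(0,0,T)`. It contains every horizontal segment of
half-length at most `L/8` centred on `parabolicBoundary L T τ` (`τ ≤ T`) off the face `y = 0`. -/
def regularRegion (L T : ℝ) : Set (ℝ × ℝ × ℝ) :=
  (Icc (-(L / 2)) (L / 2) ×ˢ Icc 0 (L / 2) ×ˢ Icc (T / 2) T) ∩
    {q | L / 8 ≤ |q.1| ∨ L / 4 ≤ q.2.1 ∨ q.2.2 = T / 2}

theorem isCompact_regularRegion (L T : ℝ) : IsCompact (regularRegion L T) :=
  (isCompact_Icc.prod (isCompact_Icc.prod isCompact_Icc)).inter_right <|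
    (isClosed_le continuous_const continuous_fst.abs).union
      ((isClosed_le continuous_const (continuous_fst.comp continuous_snd)).union
        (isClosed_eq (continuous_snd.comp continuous_snd) continuous_const))

theorem ExtC21.c21At_of_mem_regularRegion (hL : 0 < L) (hT : 0 < T) (hext : ExtC21 L T u)
    {q : ℝ × ℝ × ℝ} (hq : q ∈ regularRegion L T) : C21At u q.1 q.2.1 q.2.2 := by
  obtain ⟨⟨hx, hy, ht⟩, hfar⟩ := hq
  refine hext (abs_le.2 hx) hy ht fun ⟨hx₀, hy₀, ht₀⟩ => ?_
  rcases hfar with h | h | h <;> simp only [hx₀, hy₀, ht₀, abs_zero] at h <;> linarith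

theorem ExtC21.exists_neg_le_pdxx_on_regularRegion (hL : 0 < L) (hT : 0 < T)
    (hext : ExtC21 L T u) :
    ∃ M, 0 ≤ M ∧ ∀ q ∈ regularRegion L T, -M ≤ pdxx u q.1 q.2.1 q.2.2 := by
  obtain ⟨M, hM⟩ := (isCompact_regularRegion L T).exists_bound_of_continuousOn
    (f := fun q => pdxx u q.1 q.2.1 q.2.2)
    fun q hq => (hext.c21At_of_mem_regularRegion hL hT hq).continuousAt_pdxx.continuousWithinAt
  refine ⟨max M 0, le_max_right M 0, fun q hq => ?_⟩
  have := hM q hq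
  rw [Real.norm_eq_abs] at this
  linarith [neg_abs_le (pdxx u q.1 q.2.1 q.2.2), le_max_left M 0]

theorem ClassicalSolution.continuousOn_secondDiffX (hsol : ClassicalSolution p L T u)
    {h τ : ℝ} (hh : |h| ≤ L / 8) (hτ : τ < T) :
    ContinuousOn (fun q => secondDiffX u h q.1 q.2.1 q.2.2) (innerCylinder L T τ) := by
  rintro ⟨x, y, t⟩ ⟨⟨hx₁, hx₂⟩, ⟨hy₁, hy₂⟩, ⟨ht₁, ht₂⟩⟩
  have hcont : ∀ z, |z| ≤ L → ContinuousAt (fun q : ℝ × ℝ × ℝ => u q.1 q.2.1 q.2.2) (z, y, t) :=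
    fun z hz => (hsol.smooth hz ⟨hy₁, by linarith⟩ ⟨by linarith, by linarith⟩).continuousAt
  have habs := abs_le.1 hh
  have hC₁ : ContinuousAt (fun q : ℝ × ℝ × ℝ => u (q.1 + h) q.2.1 q.2.2) (x, y, t) :=
    (hcont (x + h) (abs_le.2 ⟨by linarith, by linarith⟩)).comp
      (f := fun q : ℝ × ℝ × ℝ => (q.1 + h, q.2.1, q.2.2)) (x := (x, y, t)) (by fun_prop)
  have hC₂ : ContinuousAt (fun q : ℝ × ℝ × ℝ => u (q.1 - h) q.2.1 q.2.2) (x, y, t) :=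
    (hcont (x - h) (abs_le.2 ⟨by linarith, by linarith⟩)).comp
      (f := fun q : ℝ × ℝ × ℝ => (q.1 - h, q.2.1, q.2.2)) (x := (x, y, t)) (by fun_prop)
  have hC₀ := hcont x (abs_le.2 ⟨by linarith, by linarith⟩)
  exact ((hC₁.add hC₂).sub (hC₀.const_mul 2)).continuousWithinAt

theorem ClassicalSolution.neg_mul_sq_le_secondDiffX_of_mem_parabolicBoundary
    (hsol : ClassicalSolution p L T u) (hext : ExtC21 L T u) (hL : 0 < L) (hT : 0 < T) (hM₀ : 0 ≤ M)
    (hM : ∀ q ∈ regularRegion L T, -M ≤ pdxx u q.1 q.2.1 q.2.2) {h τ : ℝ} (hh₀ : 0 ≤ h)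
    (hh : h ≤ L / 8) (hτ : τ < T) {q : ℝ × ℝ × ℝ} (hq : q ∈ parabolicBoundary L T τ) :
    -(M * h ^ 2) ≤ secondDiffX u h q.1 q.2.1 q.2.2 := by
  obtain ⟨x, y, t⟩ := q
  obtain ⟨⟨⟨hx₁, hx₂⟩, ⟨hy₁, hy₂⟩, ⟨ht₁, ht₂⟩⟩, hint⟩ := hq
  rcases hy₁.eq_or_lt with rfl | hy
  · have hbc : ∀ z, |z| ≤ 3 * L / 8 → u z 0 t = 0 := fun z hz =>
      hsol.bc (by linarith) ⟨by linarith, by linarith⟩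
    rw [secondDiffX, hbc x (by rw [abs_le]; constructor <;> linarith),
      hbc (x + h) (by rw [abs_le]; constructor <;> linarith),
      hbc (x - h) (by rw [abs_le]; constructor <;> linarith)]
    nlinarith
  have hface : L / 4 ≤ |x| ∨ L / 4 ≤ y ∨ t = T / 2 := by
    by_contra! hc
    exact hint ⟨abs_lt.1 hc.1, ⟨hy, hc.2.1⟩, lt_of_le_of_ne ht₁ hc.2.2.symm, ht₂⟩
  have hseg : ∀ s ∈ Icc (x - h) (x + h), (s, y, t) ∈ regularRegion L T := by
    rintro s ⟨hs₁, hs₂⟩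
    refine ⟨⟨⟨by linarith, by linarith⟩, ⟨hy₁, by linarith⟩, ⟨ht₁, by linarith⟩⟩, ?_⟩
    rcases hface with hx | hy | ht
    · left
      have : |x - s| ≤ h := abs_le.2 ⟨by linarith, by linarith⟩
      linarith [abs_sub_abs_le_abs_sub x s]
    · exact Or.inr (Or.inl hy)
    · exact Or.inr (Or.inr ht)
  have := mul_sq_le_add_sub_two_mul_of_le_deriv_deriv (f := fun s => u s y t) hh₀
    (fun s hs => (hext.c21At_of_mem_regularRegion hL hT (hseg s hs)).differentiableAt_x)
    (fun s hs => (hext.c21At_of_mem_regularRegion hL hT (hseg s hs)).differentiableAt_pdx_x)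
    (fun s hs => hM _ (hseg s hs))
  rw [secondDiffX]
  linarith

theorem ClassicalSolution.mem_parabolicBoundary_of_isMinOn (hsol : ClassicalSolution p L T u)
    (hp : 1 ≤ p) {h τ ε : ℝ} (hh : |h| ≤ L / 8) (hτ : τ < T) (hε : 0 < ε) {q : ℝ × ℝ × ℝ}
    (hq : q ∈ innerCylinder L T τ)
    (hmin : IsMinOn (fun q => secondDiffX u h q.1 q.2.1 q.2.2 + ε * q.2.2)
      (innerCylinder L T τ) q) :
    q ∈ parabolicBoundary L T τ := by
  obtain ⟨x, y, t⟩ := q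
  refine ⟨hq, fun hinterior => ?_⟩
  simp only [mem_prod, mem_Ioo, mem_Ioc] at hinterior
  obtain ⟨⟨hx₁, hx₂⟩, ⟨hy₁, hy₂⟩, ⟨ht₁, ht₂⟩⟩ := hinterior
  have hle : ∀ {x' y' t'}, x' ∈ Icc (-(L / 4)) (L / 4) → y' ∈ Icc 0 (L / 4) →
      t' ∈ Icc (T / 2) τ → secondDiffX u h x y t + ε * t ≤ secondDiffX u h x' y' t' + ε * t' :=
    fun hx' hy' ht' => isMinOn_iff.1 hmin (_, _, _) ⟨hx', hy', ht'⟩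
  refine hsol.false_of_isLocalMin_secondDiffX hp hε (h := h) (x := x) (y := y) (t := t)
    (by linarith [abs_lt.2 ⟨hx₁, hx₂⟩]) ⟨hy₁, by linarith⟩
    ⟨by linarith, by linarith⟩ ?_ ?_ ?_
  · filter_upwards [Ioo_mem_nhds hx₁ hx₂] with x' hx'
    linarith [hle (Ioo_subset_Icc_self hx') ⟨hy₁.le, hy₂.le⟩ ⟨ht₁.le, ht₂⟩]
  · filter_upwards [Ioo_mem_nhds hy₁ hy₂] with y' hy'
    linarith [hle ⟨hx₁.le, hx₂.le⟩ (Ioo_subset_Icc_self hy') ⟨ht₁.le, ht₂⟩]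
  · filter_upwards [inter_mem_nhdsWithin (Iic t) (Ioi_mem_nhds ht₁)] with t' ⟨ht't, ht'T⟩
    exact hle ⟨hx₁.le, hx₂.le⟩ ⟨hy₁.le, hy₂.le⟩ ⟨le_of_lt ht'T, le_trans ht't ht₂⟩

theorem ClassicalSolution.neg_mul_sq_le_secondDiffX (hsol : ClassicalSolution p L T u)
    (hext : ExtC21 L T u) (hp : 1 ≤ p) (hL : 0 < L) (hT : 0 < T) (hM₀ : 0 ≤ M)
    (hM : ∀ q ∈ regularRegion L T, -M ≤ pdxx u q.1 q.2.1 q.2.2) {h τ : ℝ} (hh₀ : 0 < h)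
    (hh : h ≤ L / 8) (hτ : τ < T) {q : ℝ × ℝ × ℝ} (hq : q ∈ innerCylinder L T τ) :
    -(M * h ^ 2) ≤ secondDiffX u h q.1 q.2.1 q.2.2 := by
  have habs : |h| ≤ L / 8 := by rwa [abs_of_pos hh₀]
  exact (isCompact_innerCylinder L T τ).weak_minimum_principle
    (hsol.continuousOn_secondDiffX habs hτ) (continuous_snd.comp continuous_snd).continuousOn
    (fun q hq => hsol.neg_mul_sq_le_secondDiffX_of_mem_parabolicBoundary hext hL hT hM₀ hM
      hh₀.le hh hτ hq.2)
    (fun ε hε q hq hmin => hsol.mem_parabolicBoundary_of_isMinOn hp habs hτ hε hq hmin) hq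

theorem ClassicalSolution.neg_le_pdxx_of_mem_innerCylinder_of_lt
    (hsol : ClassicalSolution p L T u) (hext : ExtC21 L T u) (hp : 1 ≤ p) (hL : 0 < L)
    (hT : 0 < T) (hM₀ : 0 ≤ M) (hM : ∀ q ∈ regularRegion L T, -M ≤ pdxx u q.1 q.2.1 q.2.2)
    {x y t : ℝ} (hq : (x, y, t) ∈ innerCylinder L T T) (htT : t < T) : -M ≤ pdxx u x y t := by
  obtain ⟨hx, hy, ht⟩ := hq
  have hxL : |x| < L := by rw [abs_lt]; constructor <;> linarith [hx.1, hx.2]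
  have hreg : ∀ᶠ s in 𝓝 x, C21At u s y t :=
    (continuous_abs.continuousAt.eventually_lt continuousAt_const hxL).mono
      fun s hs => hsol.smooth hs.le ⟨hy.1, by linarith [hy.2]⟩ ⟨by linarith [ht.1], htT⟩
  refine le_deriv_deriv_of_eventually_mul_sq_le (f := fun s => u s y t)
    (hreg.mono fun s hs => ⟨hs.differentiableAt_x, hs.differentiableAt_pdx_x⟩)
    (hreg.self_of_nhds.continuousAt_pdxx.comp (f := fun s => (s, y, t)) (x := x) (by fun_prop)) ?_
  filter_upwards [Ioo_mem_nhdsGT (by linarith : (0 : ℝ) < L / 8)] with h ⟨hh₀, hh⟩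
  have := hsol.neg_mul_sq_le_secondDiffX hext hp hL hT hM₀ hM hh₀ hh.le htT (q := (x, y, t))
    ⟨hx, hy, ⟨ht.1, le_rfl⟩⟩
  rw [secondDiffX] at this
  linarith

theorem ClassicalSolution.neg_le_pdxx_of_mem_innerCylinder (hsol : ClassicalSolution p L T u)
    (hext : ExtC21 L T u) (hp : 1 ≤ p) (hL : 0 < L) (hT : 0 < T) (hM₀ : 0 ≤ M)
    (hM : ∀ q ∈ regularRegion L T, -M ≤ pdxx u q.1 q.2.1 q.2.2) {x y t : ℝ}
    (hq : (x, y, t) ∈ innerCylinder L T T) (hne : ¬(x = 0 ∧ y = 0 ∧ t = T)) :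
    -M ≤ pdxx u x y t := by
  rcases hq.2.2.2.lt_or_eq with htT | htT
  · exact hsol.neg_le_pdxx_of_mem_innerCylinder_of_lt hext hp hL hT hM₀ hM hq htT
  subst htT
  obtain ⟨hx, hy, ht⟩ := hq
  have hcont : ContinuousAt (fun t' => pdxx u x y t') t :=
    (hext (by rw [abs_le]; constructor <;> linarith [hx.1, hx.2]) ⟨hy.1, by linarith [hy.2]⟩ ht
      hne).continuousAt_pdxx.comp (f := fun t' => (x, y, t')) (x := t) (by fun_prop)
  refine ge_of_tendsto (hcont.tendsto.mono_left (nhdsWithin_le_nhds (s := Iio t))) ?_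
  filter_upwards [Ioo_mem_nhdsLT (by linarith : t / 2 < t)] with t' ht'
  exact hsol.neg_le_pdxx_of_mem_innerCylinder_of_lt hext hp hL hT hM₀ hM
    ⟨hx, hy, ⟨ht'.1.le, ht'.2.le⟩⟩ ht'.2

end Solution

theorem uxx_lower_bound_general (p L T : ℝ) (hp : 2 < p) (hL : 0 < L) (hT : 0 < T)
    (u : ℝ → ℝ → ℝ → ℝ)
    (hsol : ClassicalSolution p L T u)
    (hext : ExtC21 L T u) :
    ∃ C : ℝ, 0 < C ∧ ∀ x y t : ℝ, |x| ≤ L/2 → y ∈ Icc (0:ℝ) (L/2) →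
      t ∈ Icc (T/2) T → ¬(x = 0 ∧ y = 0 ∧ t = T) → -C ≤ pdxx u x y t := by
  obtain ⟨M, hM₀, hM⟩ := hext.exists_neg_le_pdxx_on_regularRegion hL hT
  refine ⟨M + 1, by linarith, fun x y t hx hy ht hne => ?_⟩
  suffices -M ≤ pdxx u x y t by linarith
  by_cases hfar : L / 8 ≤ |x| ∨ L / 4 ≤ y
  · exact hM (x, y, t) ⟨⟨abs_le.1 hx, hy, ht⟩, hfar.elim Or.inl (Or.inr ∘ Or.inl)⟩
  rw [not_or, not_le, not_le] at hfar
  exact hsol.neg_le_pdxx_of_mem_innerCylinder hext (by linarith) hL hT hM₀ hM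
    ⟨abs_le.1 (by linarith : |x| ≤ L / 4), ⟨hy.1, hfar.2.le⟩, ht⟩ hne

/-- Proposition 2.2 (iii): `u_xx ≥ -C` on `Q̃ = (ω̄' × [T/2,T]) \ {(0,0,T)}`. -/
theorem uxx_lower_bound (p L T : ℝ) (hp : 2 < p) (hL : 0 < L) (hT : 0 < T)
    (u : ℝ → ℝ → ℝ → ℝ)
    (hsol : ClassicalSolution p L T u) (hgbu : IsolatedGBU L T u)
    (hext : ExtC21 L T u) :
    ∃ C : ℝ, 0 < C ∧ ∀ x y t : ℝ, |x| ≤ L/2 → y ∈ Icc (0:ℝ) (L/2) →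
      t ∈ Icc (T/2) T → ¬(x = 0 ∧ y = 0 ∧ t = T) → -C ≤ pdxx u x y t :=
  uxx_lower_bound_general p L T hp hL hT u hsol hext
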